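/- (The minimiser satisfies the Euler–Lagrange equations, weak form.) Fix t > 0 and x ∈ ℝ. Let V : [0,t] × ℝ → ℝ be continuous and bounded with bounded, continuous derivative V_x in the second variable, and let φ : ℝ → ℝ be continuously differentiable and bounded with bounded derivative. Suppose ỹ : [0,t] → ℝ is admissible (ỹ(s) = ỹ(0) + ∫_0^s g̃, g̃ ∈ L²([0,t]), ỹ(t) = x) and minimises A(y) = ½∫_0^t y'(s)² ds + ∫_0^t V(s, y(s)) ds + φ(y(0)) over all admissible y. Then for every z : [0,t] → ℝ with z(s) = z(0) + ∫_0^s h, h ∈ L²([0,t]) and z(t) = 0, one has ∫_0^t h(s)·g̃(s) ds + ∫_0^t z(s)·V_x(s, ỹ(s)) ds + z(0)·φ'(ỹ(0)) = 0. In particular, if ỹ is twice continuously differentiable then ỹ''(s) = V_x(s, ỹ(s)) for all s ∈ [0,t] and ỹ'(0) = φ'(ỹ(0)). -/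

import Mathlib

/-!
Weak form: for a variation `(z, h)` with `z t = 0`, every `(ỹ + εz, g̃ + εh)` is admissible, so
`ε ↦ A(ỹ + εz, g̃ + εh)` is minimal at `ε = 0`. Its derivative there is the left-hand side of the
weak equation: the kinetic term is a quadratic polynomial in `ε`, the potential term is
differentiated under the integral sign (dominated thanks to the bound on `V_x`), and the boundary
term by the chain rule.

Strong form: if `ỹ` is `C²`, Lebesgue's differentiation theorem gives `g̃ = ỹ'` a.e. Testing the
weak equation against the variation `z(s) = ∫ₜˢ w` with
`w = ỹ' - φ'(ỹ(0)) - ∫₀ˢ V_x(r, ỹ(r)) dr` and integrating by parts turns it into `∫₀ᵗ w² = 0`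
(du Bois-Reymond), so `ỹ'(s) = φ'(ỹ(0)) + ∫₀ˢ V_x(r, ỹ(r)) dr` on `[0, t]`.
-/

open MeasureTheory intervalIntegral Set Filter Topology
open scoped ENNReal

theorem MeasureTheory.MemLp.intervalIntegrable_of_mem_Icc {p : ℝ≥0∞} {a b s : ℝ} {g : ℝ → ℝ}
    (hp : 1 ≤ p) (hg : MemLp g p (volume.restrict (Icc a b))) (hs : s ∈ Icc a b) :
    IntervalIntegrable g volume a s :=
  (IntegrableOn.mono_set (hg.integrable hp)
    (uIcc_of_le hs.1 ▸ Icc_subset_Icc_right hs.2)).intervalIntegrable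

theorem ContinuousOn.memLp_restrict {X E : Type*} [TopologicalSpace X] [MeasurableSpace X]
    [OpensMeasurableSpace X] [NormedAddCommGroup E]
    [SecondCountableTopologyEither X E] {μ : Measure X} [IsFiniteMeasureOnCompacts μ]
    {s : Set X} {f : X → E} (hs : IsCompact s) (hsm : MeasurableSet s) (hf : ContinuousOn f s)
    (p : ℝ≥0∞) : MemLp f p (μ.restrict s) := by
  have : IsFiniteMeasure (μ.restrict s) := isFiniteMeasure_restrict.2 hs.measure_lt_top.ne
  obtain ⟨C, hC⟩ := hs.exists_bound_of_continuousOn hf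
  exact .of_bound (hf.aestronglyMeasurable hsm) C ((ae_restrict_mem hsm).mono hC)

theorem ContinuousOn.comp_graph {α β γ : Type*} [TopologicalSpace α] [TopologicalSpace β]
    [TopologicalSpace γ] {W : α → β → γ} {s : Set α} {w : α → β}
    (hW : ContinuousOn (fun p : α × β => W p.1 p.2) (s ×ˢ univ)) (hw : ContinuousOn w s) :
    ContinuousOn (fun r => W r (w r)) s :=
  hW.comp (continuousOn_id.prodMk hw) fun _ hr => ⟨hr, mem_univ _⟩

theorem ContinuousOn.exists_continuous_eqOn_Icc {a b : ℝ} (hab : a ≤ b) {f : ℝ → ℝ}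
    (hf : ContinuousOn f (Icc a b)) : ∃ F : ℝ → ℝ, Continuous F ∧ EqOn F f (Icc a b) :=
  ⟨IccExtend hab ((Icc a b).domRestrict f),
    (continuousOn_iff_continuous_domRestrict.1 hf).Icc_extend',
    fun _ hs => IccExtend_of_mem _ _ hs⟩

theorem continuousOn_of_eq_add_integral {a b : ℝ} {y g : ℝ → ℝ} (hab : a ≤ b)
    (hg : IntervalIntegrable g volume a b) (hy : ∀ s ∈ Icc a b, y s = y a + ∫ r in a..s, g r) :
    ContinuousOn y (Icc a b) := by
  rw [← uIcc_of_le hab] at hy ⊢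
  exact (continuousOn_const.add (continuousOn_primitive_interval' hg left_mem_uIcc)).congr hy

theorem ae_deriv_eq_of_eq_add_integral {a b : ℝ} {y g : ℝ → ℝ}
    (hg : IntervalIntegrable g volume a b) (hy : ∀ s ∈ Icc a b, y s = y a + ∫ r in a..s, g r) :
    ∀ᵐ s, s ∈ Ioc a b → deriv y s = g s := by
  have hb : ∀ᵐ s : ℝ, s ≠ b := by simp [ae_iff, measure_singleton]
  filter_upwards [hg.ae_hasDerivAt_integral, hb] with s hderiv hsb hs
  have hy_near : y =ᶠ[𝓝 s] fun r => y a + ∫ u in a..r, g u :=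
    eventually_of_mem (Ioo_mem_nhds hs.1 (lt_of_le_of_ne hs.2 hsb))
      fun r hr => hy r (Ioo_subset_Icc_self hr)
  have hs' : s ∈ uIcc a b := Icc_subset_uIcc (Ioc_subset_Icc_self hs)
  exact (((hderiv hs' a left_mem_uIcc).const_add (y a)).congr_of_eventuallyEq hy_near).deriv

theorem deriv_eq_of_eqOn_Icc {f F : ℝ → ℝ} {a b s F' : ℝ} (hab : a < b) (hs : s ∈ Icc a b)
    (hfF : EqOn f F (Icc a b)) (hf : DifferentiableAt ℝ f s) (hF : HasDerivAt F F' s) :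
    deriv f s = F' :=
  (uniqueDiffOn_Icc hab s hs).eq_deriv _ hf.hasDerivAt.hasDerivWithinAt
    (hF.hasDerivWithinAt.congr hfF (hfF hs))

theorem eqOn_Icc_zero_of_integral_sq_eq_zero {a b : ℝ} (hab : a < b) {w : ℝ → ℝ}
    (hw : Continuous w) (hsq : ∫ s in a..b, w s ^ 2 = 0) : EqOn w 0 (Icc a b) := by
  have hsq_ae : (fun s => w s ^ 2) =ᵐ[volume.restrict (Ioc a b)] 0 :=
    (integral_eq_zero_iff_of_le_of_nonneg_ae hab.le
      (Eventually.of_forall fun s => sq_nonneg (w s))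
      ((hw.pow 2).intervalIntegrable _ _)).1 hsq
  rw [Measure.restrict_congr_set Ioc_ae_eq_Icc] at hsq_ae
  exact Measure.eqOn_Icc_of_ae_eq volume hab.ne
    (hsq_ae.mono fun s hs => pow_eq_zero_iff two_ne_zero |>.1 hs) hw.continuousOn continuousOn_const

theorem eqOn_add_integral_of_forall_integral_mul_add_eq_zero {t c : ℝ} (ht : 0 < t)
    {u K : ℝ → ℝ} (hu : Continuous u) (hK : Continuous K)
    (hweak : ∀ z h : ℝ → ℝ, Continuous h → (∀ s, HasDerivAt z (h s) s) → z t = 0 →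
      (∫ s in (0:ℝ)..t, h s * u s) + (∫ s in (0:ℝ)..t, z s * K s) + z 0 * c = 0) :
    EqOn u (fun s => c + ∫ r in (0:ℝ)..s, K r) (Icc 0 t) := by
  set P : ℝ → ℝ := fun s => ∫ r in (0:ℝ)..s, K r
  have hP : ∀ s, HasDerivAt P (K s) s := fun s => (hK.integral_hasStrictDerivAt 0 s).hasDerivAt
  set w : ℝ → ℝ := fun s => u s - (c + P s)
  have hPc : Continuous P := continuous_iff_continuousAt.2 fun s => (hP s).continuousAt
  have hw : Continuous w := by fun_prop
  set z : ℝ → ℝ := fun s => ∫ r in t..s, w r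
  have hz : ∀ s, HasDerivAt z (w s) s := fun s => (hw.integral_hasStrictDerivAt t s).hasDerivAt
  have hzt : z t = 0 := integral_same
  have hparts : ∫ s in (0:ℝ)..t, z s * K s = -∫ s in (0:ℝ)..t, w s * P s := by
    rw [integral_mul_deriv_eq_deriv_mul (fun s _ => hz s) (fun s _ => hP s)
      (hw.intervalIntegrable _ _) (hK.intervalIntegrable _ _), hzt]
    simp [P]
  have hz0 : z 0 = -∫ s in (0:ℝ)..t, w s := integral_symm _ _
  have hweak_w := hweak z w hw hz hzt
  rw [hparts, hz0] at hweak_w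
  refine fun s hs => sub_eq_zero.1 (eqOn_Icc_zero_of_integral_sq_eq_zero ht hw ?_ hs)
  calc ∫ s in (0:ℝ)..t, w s ^ 2 = ∫ s in (0:ℝ)..t, (w s * u s - w s * P s - c * w s) := by
        congr 1 with s; ring
    _ = 0 := by
      rw [intervalIntegral.integral_sub, intervalIntegral.integral_sub,
        intervalIntegral.integral_const_mul]
      · linarith
      all_goals apply Continuous.intervalIntegrable; fun_prop

theorem hasDerivAt_half_integral_sq_add_mul {α : Type*} [MeasurableSpace α] {μ : Measure α}
    {g h : α → ℝ} (hg : MemLp g 2 μ) (hh : MemLp h 2 μ) :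
    HasDerivAt (fun ε : ℝ => (1 / 2) * ∫ s, (g s + ε * h s) ^ 2 ∂μ) (∫ s, h s * g s ∂μ) 0 := by
  have hhg : Integrable (fun s => h s * g s) μ := hh.integrable_mul hg
  have hexpand : ∀ ε : ℝ, ∫ s, (g s + ε * h s) ^ 2 ∂μ =
      ∫ s, g s ^ 2 ∂μ + ε * (2 * ∫ s, h s * g s ∂μ) + ε ^ 2 * ∫ s, h s ^ 2 ∂μ := by
    intro ε
    calc ∫ s, (g s + ε * h s) ^ 2 ∂μ
        = ∫ s, (g s ^ 2 + ε * (2 * (h s * g s)) + ε ^ 2 * h s ^ 2) ∂μ := by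
          congr 1 with s; ring
      _ = _ := by
          rw [MeasureTheory.integral_add, MeasureTheory.integral_add,
            MeasureTheory.integral_const_mul, MeasureTheory.integral_const_mul,
            MeasureTheory.integral_const_mul]
          exacts [hg.integrable_sq, (hhg.const_mul 2).const_mul ε,
            hg.integrable_sq.add ((hhg.const_mul 2).const_mul ε), hh.integrable_sq.const_mul _]
  simp_rw [hexpand]
  exact ((((hasDerivAt_id' (0 : ℝ)).mul_const _).const_add _).add
    ((hasDerivAt_pow 2 (0 : ℝ)).mul_const _)).const_mul (1 / 2 : ℝ) |>.congr_deriv (by ring)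

theorem hasDerivAt_integral_comp_add_mul {a b : ℝ} (hab : a ≤ b) {V Vx : ℝ → ℝ → ℝ}
    {y z : ℝ → ℝ} (hV : ContinuousOn (fun p : ℝ × ℝ => V p.1 p.2) (Icc a b ×ˢ univ))
    (hVx : ∀ s ∈ Icc a b, ∀ u, HasDerivAt (V s) (Vx s u) u)
    (hVxcont : ContinuousOn (fun p : ℝ × ℝ => Vx p.1 p.2) (Icc a b ×ˢ univ))
    (hVxbdd : ∃ C, ∀ s ∈ Icc a b, ∀ u, |Vx s u| ≤ C)
    (hy : ContinuousOn y (Icc a b)) (hz : ContinuousOn z (Icc a b)) :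
    HasDerivAt (fun ε : ℝ => ∫ s in a..b, V s (y s + ε * z s))
      (∫ s in a..b, z s * Vx s (y s)) 0 := by
  obtain ⟨C, hC⟩ := hVxbdd
  obtain ⟨M, hM⟩ := isCompact_Icc.exists_bound_of_continuousOn hz
  have hperturbed : ∀ ε : ℝ, ContinuousOn (fun s => y s + ε * z s) (Icc a b) :=
    fun ε => hy.add (continuousOn_const.mul hz)
  have hIoc : uIoc a b ⊆ Icc a b := uIoc_of_le hab ▸ Ioc_subset_Icc_self
  have hmeas : ∀ {f : ℝ → ℝ}, ContinuousOn f (Icc a b) →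
      AEStronglyMeasurable f (volume.restrict (uIoc a b)) :=
    fun hf => (hf.mono hIoc).aestronglyMeasurable measurableSet_uIoc
  have hderiv := hasDerivAt_integral_of_dominated_loc_of_deriv_le (x₀ := 0)
    (bound := fun _ => M * C) (F' := fun ε s => z s * Vx s (y s + ε * z s)) univ_mem
    (Eventually.of_forall fun ε => hmeas (hV.comp_graph (hperturbed ε)))
    ((hV.comp_graph (hperturbed 0)).intervalIntegrable_of_Icc hab)
    (hmeas (hz.mul (hVxcont.comp_graph (hperturbed 0))))
    (Eventually.of_forall fun s hs ε _ => ?bound) intervalIntegrable_const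
    (Eventually.of_forall fun s hs ε _ => ?deriv)
  · simpa using hderiv.2
  case bound =>
    rw [norm_mul, Real.norm_eq_abs (Vx _ _)]
    exact mul_le_mul (hM s (hIoc hs)) (hC s (hIoc hs) _) (abs_nonneg _)
      ((norm_nonneg _).trans (hM s (hIoc hs)))
  case deriv =>
    exact ((hVx s (hIoc hs) _).comp ε ((hasDerivAt_mul_const (z s)).const_add (y s))).congr_deriv
      (mul_comm _ _)

namespace EulerLagrange

def IsAdmissible (t x : ℝ) (y g : ℝ → ℝ) : Prop :=
  MemLp g 2 (volume.restrict (Icc 0 t)) ∧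
    (∀ s ∈ Icc (0:ℝ) t, y s = y 0 + ∫ r in (0:ℝ)..s, g r) ∧ y t = x

noncomputable def action (t : ℝ) (V : ℝ → ℝ → ℝ) (φ : ℝ → ℝ) (y g : ℝ → ℝ) : ℝ :=
  (1 / 2) * (∫ s in (0:ℝ)..t, g s ^ 2) + (∫ s in (0:ℝ)..t, V s (y s)) + φ (y 0)

variable {t x : ℝ} {y g z h : ℝ → ℝ}

theorem IsAdmissible.continuousOn (ht : 0 ≤ t) (hadm : IsAdmissible t x y g) :
    ContinuousOn y (Icc 0 t) :=
  continuousOn_of_eq_add_integral ht (hadm.1.intervalIntegrable_of_mem_Icc one_le_two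
    ⟨ht, le_rfl⟩) hadm.2.1

theorem IsAdmissible.add_mul (hadm : IsAdmissible t x y g) (hvar : IsAdmissible t 0 z h)
    (ε : ℝ) : IsAdmissible t x (fun s => y s + ε * z s) (fun s => g s + ε * h s) := by
  obtain ⟨hg, hy, hyt⟩ := hadm
  obtain ⟨hh, hz, hzt⟩ := hvar
  refine ⟨hg.add (hh.const_mul ε), fun s hs => ?_, by simp [hyt, hzt]⟩
  rw [intervalIntegral.integral_add (hg.intervalIntegrable_of_mem_Icc one_le_two hs)
    ((hh.intervalIntegrable_of_mem_Icc one_le_two hs).const_mul ε),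
    intervalIntegral.integral_const_mul]
  simp only [hy s hs, hz s hs]
  ring

theorem hasDerivAt_action_add_mul (ht : 0 ≤ t) {V Vx : ℝ → ℝ → ℝ} {φ : ℝ → ℝ}
    (hV : ContinuousOn (fun p : ℝ × ℝ => V p.1 p.2) (Icc 0 t ×ˢ univ))
    (hVx : ∀ s ∈ Icc 0 t, ∀ u, HasDerivAt (V s) (Vx s u) u)
    (hVxcont : ContinuousOn (fun p : ℝ × ℝ => Vx p.1 p.2) (Icc 0 t ×ˢ univ))
    (hVxbdd : ∃ C, ∀ s ∈ Icc 0 t, ∀ u, |Vx s u| ≤ C) (hφ : DifferentiableAt ℝ φ (y 0))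
    (hadm : IsAdmissible t x y g) (hvar : IsAdmissible t 0 z h) :
    HasDerivAt (fun ε => action t V φ (fun s => y s + ε * z s) (fun s => g s + ε * h s))
      ((∫ s in (0:ℝ)..t, h s * g s) + (∫ s in (0:ℝ)..t, z s * Vx s (y s))
        + z 0 * deriv φ (y 0)) 0 := by
  have hIoc : volume.restrict (Ioc 0 t) ≤ volume.restrict (Icc 0 t) :=
    Measure.restrict_mono Ioc_subset_Icc_self le_rfl
  have hkinetic := hasDerivAt_half_integral_sq_add_mul (hadm.1.mono_measure hIoc)
    (hvar.1.mono_measure hIoc)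
  simp only [← intervalIntegral.integral_of_le ht] at hkinetic
  have hpotential := hasDerivAt_integral_comp_add_mul ht hV hVx hVxcont hVxbdd
    (hadm.continuousOn ht) (hvar.continuousOn ht)
  have hboundary : HasDerivAt (fun ε : ℝ => φ (y 0 + ε * z 0)) (z 0 * deriv φ (y 0)) 0 :=
    (hφ.hasDerivAt.comp_of_eq 0 ((hasDerivAt_mul_const (z 0)).const_add (y 0))
      (by simp)).congr_deriv (mul_comm _ _)
  exact (hkinetic.add hpotential).add hboundary

theorem weak_euler_lagrange_of_isMinOn (ht : 0 ≤ t) {V Vx : ℝ → ℝ → ℝ} {φ : ℝ → ℝ}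
    (hV : ContinuousOn (fun p : ℝ × ℝ => V p.1 p.2) (Icc 0 t ×ˢ univ))
    (hVx : ∀ s ∈ Icc 0 t, ∀ u, HasDerivAt (V s) (Vx s u) u)
    (hVxcont : ContinuousOn (fun p : ℝ × ℝ => Vx p.1 p.2) (Icc 0 t ×ˢ univ))
    (hVxbdd : ∃ C, ∀ s ∈ Icc 0 t, ∀ u, |Vx s u| ≤ C) (hφ : DifferentiableAt ℝ φ (y 0))
    (hadm : IsAdmissible t x y g)
    (hmin : ∀ y' g', IsAdmissible t x y' g' → action t V φ y g ≤ action t V φ y' g')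
    (hvar : IsAdmissible t 0 z h) :
    (∫ s in (0:ℝ)..t, h s * g s) + (∫ s in (0:ℝ)..t, z s * Vx s (y s))
      + z 0 * deriv φ (y 0) = 0 := by
  refine IsLocalMin.hasDerivAt_eq_zero (Eventually.of_forall fun ε => ?_)
    (hasDerivAt_action_add_mul ht hV hVx hVxcont hVxbdd hφ hadm hvar)
  simpa using hmin _ _ (hadm.add_mul hvar ε)

theorem euler_lagrange_of_weak (ht : 0 < t) {Vx : ℝ → ℝ → ℝ} {c : ℝ}
    (hVxcont : ContinuousOn (fun p : ℝ × ℝ => Vx p.1 p.2) (Icc 0 t ×ˢ univ))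
    (hy : ContDiff ℝ 2 y) (hadm : IsAdmissible t x y g)
    (hweak : ∀ z h, IsAdmissible t 0 z h →
      (∫ s in (0:ℝ)..t, h s * g s) + (∫ s in (0:ℝ)..t, z s * Vx s (y s)) + z 0 * c = 0) :
    (∀ s ∈ Icc 0 t, deriv (deriv y) s = Vx s (y s)) ∧ deriv y 0 = c := by
  obtain ⟨K, hK, hKeq⟩ :=
    (hVxcont.comp_graph hy.continuous.continuousOn).exists_continuous_eqOn_Icc ht.le
  have hg_ae := ae_deriv_eq_of_eq_add_integral
    (hadm.1.intervalIntegrable_of_mem_Icc one_le_two ⟨ht.le, le_rfl⟩) hadm.2.1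
  have hderiv : EqOn (deriv y) (fun s => c + ∫ r in (0:ℝ)..s, K r) (Icc 0 t) := by
    refine eqOn_add_integral_of_forall_integral_mul_add_eq_zero ht
      (hy.continuous_deriv one_le_two) hK fun z h hh hz hzt => ?_
    have hz_int s (_ : s ∈ Icc (0:ℝ) t) : z s = z 0 + ∫ r in (0:ℝ)..s, h r := by
      rw [integral_eq_sub_of_hasDerivAt (fun r _ => hz r) (hh.intervalIntegrable 0 s)]; ring
    have hkinetic : ∫ s in (0:ℝ)..t, h s * g s = ∫ s in (0:ℝ)..t, h s * deriv y s :=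
      integral_congr_ae (hg_ae.mono fun s hs hs' => by rw [hs (uIoc_of_le ht.le ▸ hs')])
    have hpotential : ∫ s in (0:ℝ)..t, z s * Vx s (y s) = ∫ s in (0:ℝ)..t, z s * K s :=
      integral_congr fun s hs => by simp only [hKeq (uIcc_of_le ht.le ▸ hs)]
    rw [← hkinetic, ← hpotential]
    exact hweak z h ⟨hh.continuousOn.memLp_restrict isCompact_Icc measurableSet_Icc 2, hz_int, hzt⟩
  refine ⟨fun s hs => ?_, by simpa using hderiv ⟨le_rfl, ht.le⟩⟩
  exact (deriv_eq_of_eqOn_Icc ht hs hderiv (hy.differentiable_deriv_two s)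
    ((hK.integral_hasStrictDerivAt 0 s).hasDerivAt.const_add _)).trans (hKeq hs)

end EulerLagrange

theorem minimiser_satisfies_euler_lagrange_general (t x : ℝ) (ht : 0 < t)
    (V : ℝ → ℝ → ℝ) (φ : ℝ → ℝ)
    (hVcont : ContinuousOn (fun p : ℝ × ℝ => V p.1 p.2) (Set.Icc 0 t ×ˢ Set.univ))
    (Vx : ℝ → ℝ → ℝ)
    (hVx : ∀ s ∈ Set.Icc (0:ℝ) t, ∀ y, HasDerivAt (V s) (Vx s y) y)
    (hVxcont : ContinuousOn (fun p : ℝ × ℝ => Vx p.1 p.2) (Set.Icc 0 t ×ˢ Set.univ))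
    (hVxbdd : ∃ C, ∀ s ∈ Set.Icc (0:ℝ) t, ∀ y, |Vx s y| ≤ C)
    (hφ : ContDiff ℝ 1 φ)
    (Adm : (ℝ → ℝ) → (ℝ → ℝ) → Prop)
    (hAdm : ∀ y g, Adm y g ↔
      MemLp g 2 (volume.restrict (Set.Icc (0:ℝ) t)) ∧
      (∀ s ∈ Set.Icc (0:ℝ) t, y s = y 0 + ∫ r in (0:ℝ)..s, g r) ∧
      y t = x)
    (A : (ℝ → ℝ) → (ℝ → ℝ) → ℝ)
    (hA : ∀ y g, A y g = (1 / 2) * (∫ s in (0:ℝ)..t, (g s) ^ 2)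
        + (∫ s in (0:ℝ)..t, V s (y s)) + φ (y 0))
    (ytilde gtilde : ℝ → ℝ) (hadm : Adm ytilde gtilde)
    (hmin : ∀ y g, Adm y g → A ytilde gtilde ≤ A y g) :
    (∀ z h : ℝ → ℝ,
      MemLp h 2 (volume.restrict (Set.Icc (0:ℝ) t)) →
      (∀ s ∈ Set.Icc (0:ℝ) t, z s = z 0 + ∫ r in (0:ℝ)..s, h r) →
      z t = 0 →
      (∫ s in (0:ℝ)..t, h s * gtilde s)
        + (∫ s in (0:ℝ)..t, z s * Vx s (ytilde s))
        + z 0 * deriv φ (ytilde 0) = 0) ∧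
    (ContDiff ℝ 2 ytilde →
      (∀ s ∈ Set.Icc (0:ℝ) t, deriv (deriv ytilde) s = Vx s (ytilde s)) ∧
      deriv ytilde 0 = deriv φ (ytilde 0)) := by
  obtain rfl : Adm = EulerLagrange.IsAdmissible t x := by ext y g; exact hAdm y g
  obtain rfl : A = EulerLagrange.action t V φ := by ext y g; exact hA y g
  have hweak z h (hvar : EulerLagrange.IsAdmissible t 0 z h) :=
    EulerLagrange.weak_euler_lagrange_of_isMinOn ht.le hVcont hVx hVxcont hVxbdd
      (hφ.differentiable one_ne_zero _) hadm hmin hvar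
  exact ⟨fun z h hh hz hzt => hweak z h ⟨hh, hz, hzt⟩,
    fun hy => EulerLagrange.euler_lagrange_of_weak ht hVxcont hy hadm hweak⟩

/-- **The minimiser satisfies the Euler–Lagrange equations (weak form).**
If the admissible `W^{1,2}` trajectory `ỹ` (with a.e. derivative `g̃`, endpoint `ỹ(t) = x`)
minimises the action `A(y) = ½∫₀ᵗ y'² + ∫₀ᵗ V(s,y(s)) ds + φ(y(0))` over all admissible
trajectories, then for every `W^{1,2}` variation `z` with `z(t) = 0`,
`∫₀ᵗ h g̃ + ∫₀ᵗ z(s) V_x(s,ỹ(s)) ds + z(0) φ'(ỹ(0)) = 0`; in particular, if `ỹ` is twice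
continuously differentiable then `ỹ'' = V_x(s,ỹ)` on `[0,t]` and `ỹ'(0) = φ'(ỹ(0))`. -/
theorem minimiser_satisfies_euler_lagrange (t x : ℝ) (ht : 0 < t)
    (V : ℝ → ℝ → ℝ) (φ : ℝ → ℝ)
    (hVcont : ContinuousOn (fun p : ℝ × ℝ => V p.1 p.2) (Set.Icc 0 t ×ˢ Set.univ))
    (hVbdd : ∃ C, ∀ s ∈ Set.Icc (0:ℝ) t, ∀ y, |V s y| ≤ C)
    (Vx : ℝ → ℝ → ℝ)
    (hVx : ∀ s ∈ Set.Icc (0:ℝ) t, ∀ y, HasDerivAt (V s) (Vx s y) y)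
    (hVxcont : ContinuousOn (fun p : ℝ × ℝ => Vx p.1 p.2) (Set.Icc 0 t ×ˢ Set.univ))
    (hVxbdd : ∃ C, ∀ s ∈ Set.Icc (0:ℝ) t, ∀ y, |Vx s y| ≤ C)
    (hφ : ContDiff ℝ 1 φ) (hφbdd : ∃ C, ∀ y, |φ y| ≤ C)
    (hφ'bdd : ∃ C, ∀ y, |deriv φ y| ≤ C)
    (Adm : (ℝ → ℝ) → (ℝ → ℝ) → Prop)
    (hAdm : ∀ y g, Adm y g ↔
      MemLp g 2 (volume.restrict (Set.Icc (0:ℝ) t)) ∧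
      (∀ s ∈ Set.Icc (0:ℝ) t, y s = y 0 + ∫ r in (0:ℝ)..s, g r) ∧
      y t = x)
    (A : (ℝ → ℝ) → (ℝ → ℝ) → ℝ)
    (hA : ∀ y g, A y g = (1 / 2) * (∫ s in (0:ℝ)..t, (g s) ^ 2)
        + (∫ s in (0:ℝ)..t, V s (y s)) + φ (y 0))
    (ytilde gtilde : ℝ → ℝ) (hadm : Adm ytilde gtilde)
    (hmin : ∀ y g, Adm y g → A ytilde gtilde ≤ A y g) :
    (∀ z h : ℝ → ℝ,
      MemLp h 2 (volume.restrict (Set.Icc (0:ℝ) t)) →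
      (∀ s ∈ Set.Icc (0:ℝ) t, z s = z 0 + ∫ r in (0:ℝ)..s, h r) →
      z t = 0 →
      (∫ s in (0:ℝ)..t, h s * gtilde s)
        + (∫ s in (0:ℝ)..t, z s * Vx s (ytilde s))
        + z 0 * deriv φ (ytilde 0) = 0) ∧
    (ContDiff ℝ 2 ytilde →
      (∀ s ∈ Set.Icc (0:ℝ) t, deriv (deriv ytilde) s = Vx s (ytilde s)) ∧
      deriv ytilde 0 = deriv φ (ytilde 0)) :=
  minimiser_satisfies_euler_lagrange_general t x ht V φ hVcont Vx hVx hVxcont hVxbdd hφ Adm hAdm A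
    hA ytilde gtilde hadm hmin
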